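/- Let A be a finite-dimensional formally real Jordan algebra with an associative inner product ⟨·,·⟩. Then ⟨XY, XY⟩ ≤ ⟨X², Y²⟩ for all X, Y in A. -/

import Mathlib

/-!
Fix `x` and let `D = L_{x²} - L_x²`, so that `⟪D y, y⟫ = ⟪x², y²⟫ - ⟪xy, xy⟫`; it suffices to show
that `D` is a positive operator. Associativity of the inner product makes every `L_z`, hence `D`,
symmetric, and the Jordan identity makes `D` commute with `L_x`. So an eigenvalue `d` of `D` has an
eigenvector `u` with `xu = γu`. Replacing `x` by `a = x - γe` does not change `D`, and now `au = 0`,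
`a²u = du`. The linearized Jordan identity turns this into `a(a u²) = d u²`, whence
`d ⟪u², u²⟫ = ⟪a u², a u²⟫ ≥ 0`; finally `u² ≠ 0` since `⟪u², e⟫ = ⟪u, u⟫`.
-/

open RealInnerProductSpace Module End

theorem LinearMap.IsSymmetric.isPositive_of_hasEigenvalue_nonneg {E : Type*}
    [NormedAddCommGroup E] [InnerProductSpace ℝ E] [FiniteDimensional ℝ E] {T : End ℝ E}
    (hT : T.IsSymmetric) (h : ∀ μ, HasEigenvalue T μ → 0 ≤ μ) : T.IsPositive := by
  refine T.isPositive_iff.2 ⟨hT, fun y => ?_⟩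
  set b := hT.eigenvectorBasis rfl
  rw [← b.sum_inner_mul_inner (T y) y]
  refine Finset.sum_nonneg fun i _ => ?_
  rw [hT, hT.apply_eigenvectorBasis, real_inner_smul_right, real_inner_comm y, mul_assoc]
  exact mul_nonneg (h _ (hT.hasEigenvalue_eigenvalues rfl i)) (mul_self_nonneg _)

theorem Module.End.exists_hasEigenvector_of_commute {𝕜 E : Type*} [RCLike 𝕜]
    [NormedAddCommGroup E] [InnerProductSpace 𝕜 E] [FiniteDimensional 𝕜 E]
    {A B : End 𝕜 E} (hB : B.IsSymmetric) (hAB : Commute A B) {α : 𝕜}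
    (hα : HasEigenvalue A α) : ∃ γ u, HasEigenvector A α u ∧ HasEigenvector B γ u := by
  by_contra! h
  refine hasEigenvalue_iff.1 hα ?_
  rw [← LinearMap.IsSymmetric.iSup_eigenspace_inf_eigenspace_of_commute hB hAB, iSup_eq_bot]
  refine fun γ => (Submodule.eq_bot_iff _).2 fun u hu => ?_
  by_contra hu0
  exact h γ u ⟨hu.1, hu0⟩ ⟨hu.2, hu0⟩

namespace JordanProduct

section Defect

variable {R M : Type*} [CommRing R] [AddCommGroup M] [Module R M] (mul : M →ₗ[R] M →ₗ[R] M)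

def defect (x : M) : End R M := mul (mul x x) - mul x * mul x

theorem defect_apply (x y : M) : defect mul x y = mul (mul x x) y - mul x (mul x y) := rfl

theorem commute_defect (jordan : ∀ x y, mul x (mul (mul x x) y) = mul (mul x x) (mul x y))
    (x : M) : Commute (defect mul x) (mul x) := by
  ext y
  simp only [Module.End.mul_apply, defect_apply, map_sub, jordan]

theorem defect_sub_smul {e : M} (comm : ∀ x y, mul x y = mul y x) (he : ∀ x, mul e x = x)
    (x : M) (c : R) : defect mul (x - c • e) = defect mul x := by
  ext y
  simp only [defect_apply, map_sub, map_smul, LinearMap.sub_apply, LinearMap.smul_apply, he,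
    comm x e]
  module

end Defect

section Linearization

variable {K M : Type*} [Field K] [CharZero K] [AddCommGroup M] [Module K M]
  (mul : M →ₗ[K] M →ₗ[K] M)

theorem jordan_linearized (comm : ∀ x y, mul x y = mul y x)
    (jordan : ∀ x y, mul x (mul (mul x x) y) = mul (mul x x) (mul x y)) (p q r : M) :
    mul q (mul (mul p p) r) + (2 : K) • mul p (mul (mul p q) r)
      = (2 : K) • mul (mul p q) (mul p r) + mul (mul p p) (mul q r) := by
  have hadd := jordan (p + q) r
  have hsub := jordan (p - q) r
  simp only [map_add, map_sub, LinearMap.add_apply, LinearMap.sub_apply, comm q p] at hadd hsub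
  linear_combination (norm := module) (2⁻¹ : K) • hadd - (2⁻¹ : K) • hsub - jordan q r

theorem commute_mul_mul_self_of_mul_eq_zero (comm : ∀ x y, mul x y = mul y x)
    (jordan : ∀ x y, mul x (mul (mul x x) y) = mul (mul x x) (mul x y)) {a v : M}
    (hav : mul a v = 0) : Commute (mul a) (mul (mul v v)) := by
  ext w
  simpa [comm v a, hav] using jordan_linearized mul comm jordan v a w

theorem mul_mul_self_mul_self_of_mul_eq_zero (comm : ∀ x y, mul x y = mul y x)
    (jordan : ∀ x y, mul x (mul (mul x x) y) = mul (mul x x) (mul x y)) {a v : M}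
    (hav : mul a v = 0) : mul (mul a a) (mul v v) = mul v (mul (mul a a) v) := by
  simpa [hav] using (jordan_linearized mul comm jordan a v v).symm

end Linearization

section Inner

variable {V : Type*} [NormedAddCommGroup V] [InnerProductSpace ℝ V] (mul : V →ₗ[ℝ] V →ₗ[ℝ] V)

theorem isSymmetric_mul (comm : ∀ x y, mul x y = mul y x)
    (assoc : ∀ x y z, ⟪mul x y, z⟫ = ⟪x, mul y z⟫) (x : V) : (mul x).IsSymmetric := by
  intro y z
  rw [comm, assoc]

theorem isSymmetric_defect (comm : ∀ x y, mul x y = mul y x)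
    (assoc : ∀ x y z, ⟪mul x y, z⟫ = ⟪x, mul y z⟫) (x : V) : (defect mul x).IsSymmetric :=
  have hx := isSymmetric_mul mul comm assoc x
  (isSymmetric_mul mul comm assoc _).sub (hx.mul_of_commute hx (.refl _))

theorem inner_defect_self (comm : ∀ x y, mul x y = mul y x)
    (assoc : ∀ x y z, ⟪mul x y, z⟫ = ⟪x, mul y z⟫) (x y : V) :
    ⟪defect mul x y, y⟫ = ⟪mul x x, mul y y⟫ - ⟪mul x y, mul x y⟫ := by
  rw [defect_apply, inner_sub_left, assoc (mul x x), isSymmetric_mul mul comm assoc x (mul x y)]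

theorem mul_self_ne_zero_of_ne_zero {e : V} (comm : ∀ x y, mul x y = mul y x)
    (assoc : ∀ x y z, ⟪mul x y, z⟫ = ⟪x, mul y z⟫) (he : ∀ x, mul e x = x) {v : V}
    (hv : v ≠ 0) : mul v v ≠ 0 := by
  have h : ⟪mul v v, e⟫ = ⟪v, v⟫ := by rw [assoc, comm v e, he]
  intro hvv
  rw [hvv, inner_zero_left, eq_comm, inner_self_eq_zero] at h
  exact hv h

theorem nonneg_of_mul_eq_zero_of_mul_mul_self_eq_smul {e : V}
    (comm : ∀ x y, mul x y = mul y x)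
    (jordan : ∀ x y, mul x (mul (mul x x) y) = mul (mul x x) (mul x y))
    (assoc : ∀ x y z, ⟪mul x y, z⟫ = ⟪x, mul y z⟫) (he : ∀ x, mul e x = x)
    {a v : V} {d : ℝ} (hv : v ≠ 0) (hav : mul a v = 0) (hd : mul (mul a a) v = d • v) :
    0 ≤ d := by
  set w := mul v v
  have haaw : mul a (mul a w) = d • w := by
    calc mul a (mul a w) = mul a (mul w a) := by rw [comm a w]
      _ = mul w (mul a a) :=
        LinearMap.congr_fun (commute_mul_mul_self_of_mul_eq_zero mul comm jordan hav) a
      _ = mul (mul a a) w := comm _ _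
      _ = d • w := by rw [mul_mul_self_mul_self_of_mul_eq_zero mul comm jordan hav, hd, map_smul]
  have hw : 0 < ⟪w, w⟫ := real_inner_self_pos.2 (mul_self_ne_zero_of_ne_zero mul comm assoc he hv)
  have hdw : d * ⟪w, w⟫ = ⟪mul a w, mul a w⟫ := by
    rw [← real_inner_smul_left, ← haaw, isSymmetric_mul mul comm assoc]
  nlinarith [real_inner_self_nonneg (x := mul a w)]

theorem nonneg_of_hasEigenvalue_defect [FiniteDimensional ℝ V] {e : V}
    (comm : ∀ x y, mul x y = mul y x)
    (jordan : ∀ x y, mul x (mul (mul x x) y) = mul (mul x x) (mul x y))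
    (assoc : ∀ x y z, ⟪mul x y, z⟫ = ⟪x, mul y z⟫) (he : ∀ x, mul e x = x)
    {x : V} {d : ℝ} (hd : HasEigenvalue (defect mul x) d) : 0 ≤ d := by
  obtain ⟨γ, u, hDu, hxu⟩ := exists_hasEigenvector_of_commute
    (isSymmetric_mul mul comm assoc x) (commute_defect mul jordan x) hd
  set a := x - γ • e
  have hau : mul a u = 0 := by
    simp only [a, map_sub, map_smul, LinearMap.sub_apply, LinearMap.smul_apply, he,
      hxu.apply_eq_smul, sub_self]
  have haau : mul (mul a a) u = d • u := by
    have h := hDu.apply_eq_smul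
    rwa [← defect_sub_smul mul comm he x γ, defect_apply, hau, map_zero, sub_zero] at h
  exact nonneg_of_mul_eq_zero_of_mul_mul_self_eq_smul mul comm jordan assoc he hDu.2 hau haau

theorem isPositive_defect [FiniteDimensional ℝ V] {e : V}
    (comm : ∀ x y, mul x y = mul y x)
    (jordan : ∀ x y, mul x (mul (mul x x) y) = mul (mul x x) (mul x y))
    (assoc : ∀ x y z, ⟪mul x y, z⟫ = ⟪x, mul y z⟫) (he : ∀ x, mul e x = x) (x : V) :
    (defect mul x).IsPositive :=
  (isSymmetric_defect mul comm assoc x).isPositive_of_hasEigenvalue_nonneg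
    fun _ => nonneg_of_hasEigenvalue_defect mul comm jordan assoc he

end Inner

end JordanProduct

theorem formally_real_inner_ineq
    {V : Type*} [NormedAddCommGroup V] [InnerProductSpace ℝ V] [FiniteDimensional ℝ V]
    (mul : V →ₗ[ℝ] V →ₗ[ℝ] V)
    (comm : ∀ X Y : V, mul X Y = mul Y X)
    (jordan : ∀ X Y : V, mul X (mul (mul X X) Y) = mul (mul X X) (mul X Y))
    (E : V) (hE : ∀ X : V, mul E X = X)
    (assoc : ∀ X Y Z : V, ⟪mul X Y, Z⟫ = ⟪X, mul Y Z⟫) :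
    ∀ X Y : V, ⟪mul X Y, mul X Y⟫ ≤ ⟪mul X X, mul Y Y⟫ := by
  intro X Y
  have h := (JordanProduct.isPositive_defect mul comm jordan assoc hE X).inner_nonneg_left Y
  rw [JordanProduct.inner_defect_self mul comm assoc] at h
  linarith
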